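/- Let a ∈ K⟦z⟧ and P₀,...,P_N ∈ K[z]. For any J ≥ 1, the coefficient of z^J in ∑_{n=0}^N P_n aⁿ minus the coefficient of z^J in ∑_{n=0}^N P_n (∑_{j=0}^{J-1} a_j z^j)ⁿ equals a_J · ∑_{n=1}^N n P_n(0) a₀^{n-1}. -/

import Mathlib

/-!
Write `T` for the truncation of `a` below degree `J`. Since `a - T` is divisible by `X ^ J`,
`aⁿ - Tⁿ = (a - T) · ∑ᵢ aⁱ Tⁿ⁻¹⁻ⁱ` only sees the constant term of the geometric sum in degree `J`,
and as `a` and `T` share the constant term `a₀` (this needs `J ≥ 1`), that constant term is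
`n a₀ⁿ⁻¹`. Multiplying by `Pₙ` contributes `Pₙ(0)`, and summing over `n` gives the identity.
-/

namespace PowerSeries

variable {R : Type*}

theorem coeff_mul_of_X_pow_dvd [CommSemiring R] {n : ℕ} (f : R⟦X⟧) {g : R⟦X⟧}
    (hg : X ^ n ∣ g) : coeff n (f * g) = constantCoeff f * coeff n g := by
  obtain ⟨h, rfl⟩ := hg
  rw [mul_left_comm, coeff_X_pow_mul', coeff_X_pow_mul', if_pos le_rfl, if_pos le_rfl,
    Nat.sub_self, coeff_zero_eq_constantCoeff_apply, map_mul, coeff_zero_eq_constantCoeff_apply]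

variable [CommRing R]

theorem X_pow_dvd_sub_trunc (n : ℕ) (f : R⟦X⟧) : X ^ n ∣ f - (trunc n f : R⟦X⟧) :=
  ⟨_, sub_eq_iff_eq_add.2 (eq_X_pow_mul_shift_add_trunc n f)⟩

theorem coeff_sub_trunc_self (n : ℕ) (f : R⟦X⟧) : coeff n (f - (trunc n f : R⟦X⟧)) = coeff n f := by
  simp [Polynomial.coeff_coe, coeff_trunc]

theorem coeff_mul_pow_sub_coeff_mul_pow {n : ℕ} (hn : 1 ≤ n) (p : R⟦X⟧) {f g : R⟦X⟧}
    (hfg : X ^ n ∣ f - g) (k : ℕ) :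
    coeff n (p * f ^ k) - coeff n (p * g ^ k) =
      coeff n (f - g) * (k * constantCoeff p * constantCoeff f ^ (k - 1)) := by
  have hconst : constantCoeff g = constantCoeff f := by
    have : X ∣ f - g := (dvd_pow_self X (by omega)).trans hfg
    rw [X_dvd_iff, map_sub, sub_eq_zero] at this
    exact this.symm
  calc coeff n (p * f ^ k) - coeff n (p * g ^ k)
      = coeff n ((p * ∑ i ∈ Finset.range k, f ^ i * g ^ (k - 1 - i)) * (f - g)) := by
        rw [← map_sub, mul_assoc, geom_sum₂_mul, mul_sub]
    _ = constantCoeff (p * ∑ i ∈ Finset.range k, f ^ i * g ^ (k - 1 - i)) * coeff n (f - g) :=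
        coeff_mul_of_X_pow_dvd _ hfg
    _ = coeff n (f - g) * (k * constantCoeff p * constantCoeff f ^ (k - 1)) := by
        rw [map_mul, RingHom.map_geom_sum₂, hconst, geom_sum₂_self]
        ring

end PowerSeries

theorem key_lemma (K : Type*) [CommRing K] (N : ℕ)
    (P : ℕ → Polynomial K) (a : PowerSeries K) (J : ℕ) (hJ : 1 ≤ J) :
    PowerSeries.coeff (R := K) J (∑ n ∈ Finset.range (N + 1), (P n : PowerSeries K) * a ^ n) -
      PowerSeries.coeff (R := K) J
        (∑ n ∈ Finset.range (N + 1),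
          (P n : PowerSeries K) * ((a.trunc J : Polynomial K) : PowerSeries K) ^ n) =
      PowerSeries.coeff (R := K) J a *
        ∑ n ∈ Finset.range (N + 1),
          (n : K) * (P n).coeff 0 * (PowerSeries.coeff (R := K) 0 a) ^ (n - 1) := by
  rw [map_sum, map_sum, ← Finset.sum_sub_distrib, Finset.mul_sum]
  refine Finset.sum_congr rfl fun n _ => ?_
  rw [PowerSeries.coeff_mul_pow_sub_coeff_mul_pow hJ _ (PowerSeries.X_pow_dvd_sub_trunc J a),
    PowerSeries.coeff_sub_trunc_self, Polynomial.constantCoeff_coe,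
    PowerSeries.coeff_zero_eq_constantCoeff_apply]
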